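/- Theorem 2 (impact of cell width and depth on block-wise Lipschitz smoothness): Let F : (ℝ^d)^n → ℝ be differentiable, x ∈ ℝ^d, and let f and f̂ be the widest-cell and narrowest-cell objectives respectively; write Ŵ^{(k)} = ∏_{j=1}^{k} W^{(j)} for the effective weights, λ^{(j)} = ‖W^{(j)}‖, and fix i ∈ {1,…,n}. Let (W_1^{(1)},…,W_1^{(n)}) and (W_2^{(1)},…,W_2^{(n)}) be two parameter tuples that differ only in the i-th block (W_1^{(j)} = W_2^{(j)} = W^{(j)} for j ≠ i). Assume the block-wise Lipschitz condition that for every k ∈ {i,…,n}, ‖∂f/∂V^{(k)}(Ŵ_1) − ∂f/∂V^{(k)}(Ŵ_2)‖ ≤ L_k ‖W_1^{(k)} − W_2^{(k)}‖, where Ŵ_1, Ŵ_2 denote the tuples of effective weights built from the two parameter tuples. Then ‖∂f̂/∂W^{(i)}(W_1) − ∂f̂/∂W^{(i)}(W_2)‖ ≤ (∏_{j=1}^{i−1} λ^{(j)}) L_i ‖W_1^{(i)} − W_2^{(i)}‖. -/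

import Mathlib

/-!
Statement 5 (Theorem 2): impact of cell width and depth on block-wise Lipschitz smoothness.
`‖·‖` is the spectral (ℓ2 operator) norm on real `d × d` matrices (scoped `Matrix.L2OpNorm`
instances).  Indices of the `n` intermediate nodes are `0, …, n-1` (the paper's
`W^{(1)}, …, W^{(n)}` correspond to `W 0, …, W (n-1)`).  The reversed product convention
`∏_{j=a}^{b} W^{(j)} = W^{(b)} ⋯ W^{(a)}` is implemented by `prodRev`; empty matrix products
are the identity and empty real products are `1`.  The two parameter tuples differ only in the
`i`-th block: they are `Function.update W i W1i` and `Function.update W i W2i`.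
-/

open scoped Matrix.Norms.L2Operator

open Matrix

/-- Reversed (descending-index) product of the matrices `W j`, `j ∈ s`;
the empty product is the identity. -/
noncomputable def prodRev {n d : ℕ} (W : Fin n → Matrix (Fin d) (Fin d) ℝ)
    (s : Finset (Fin n)) : Matrix (Fin d) (Fin d) ℝ :=
  (((s.sort (· ≤ ·)).map W).reverse).prod

/-- `∂g/∂W⁽ⁱ⁾`: the `d × d` matrix whose `(a, b)` entry is the partial derivative of the scalar
function `g` of an `n`-tuple of `d × d` real matrices with respect to the `(a, b)` entry of the
`i`-th matrix argument. -/
noncomputable def matGrad {n d : ℕ}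
    (g : (Fin n → Matrix (Fin d) (Fin d) ℝ) → ℝ)
    (W : Fin n → Matrix (Fin d) (Fin d) ℝ) (i : Fin n) : Matrix (Fin d) (Fin d) ℝ :=
  Matrix.of fun a b => fderiv ℝ g W (Pi.single i (Matrix.single a b 1))

/-!
Only the effective weights `Ŵ⁽ᵏ⁾` with `k ≥ i` depend on `W⁽ⁱ⁾`, and they do so affinely:
`Ŵ⁽ᵏ⁾ = B⁽ᵏ⁾ W⁽ⁱ⁾ A` with `B⁽ᵏ⁾ = W⁽ᵏ⁾ ⋯ W⁽ⁱ⁺¹⁾` and `A = W⁽ⁱ⁻¹⁾ ⋯ W⁽¹⁾`. The chain rule therefore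
gives `∂f̂/∂W⁽ⁱ⁾ = ∑_{k ≥ i} B⁽ᵏ⁾ᵀ (∂f/∂V⁽ᵏ⁾)(Ŵ) Aᵀ`. For `k > i` the two parameter tuples agree
in block `k`, so the Lipschitz hypothesis forces the `k`-th widest-cell gradients at `Ŵ₁` and `Ŵ₂`
to coincide, and those terms cancel in the difference. What is left is the `k = i` term
(`B⁽ⁱ⁾ = 1`), of norm at most `L_i ‖W₁⁽ⁱ⁾ - W₂⁽ⁱ⁾‖ ‖A‖ ≤ L_i ‖W₁⁽ⁱ⁾ - W₂⁽ⁱ⁾‖ ∏_{j<i} λ⁽ʲ⁾`.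
-/

section prodRev

variable {n d : ℕ} (W : Fin n → Matrix (Fin d) (Fin d) ℝ)

@[simp]
theorem prodRev_empty : prodRev W ∅ = 1 := by simp [prodRev]

theorem prodRev_insert_of_forall_le {a : Fin n} {s : Finset (Fin n)} (hmin : ∀ b ∈ s, a ≤ b)
    (ha : a ∉ s) : prodRev W (insert a s) = prodRev W s * W a := by
  simp [prodRev, Finset.sort_insert _ hmin ha]

theorem prodRev_congr {W' : Fin n → Matrix (Fin d) (Fin d) ℝ} {s : Finset (Fin n)}
    (h : ∀ j ∈ s, W j = W' j) : prodRev W s = prodRev W' s := by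
  unfold prodRev
  congr 2
  exact List.map_congr_left fun j hj => h j ((Finset.mem_sort _).1 hj)

theorem prodRev_update_of_notMem {i : Fin n} {s : Finset (Fin n)} (hi : i ∉ s)
    (M : Matrix (Fin d) (Fin d) ℝ) : prodRev (Function.update W i M) s = prodRev W s :=
  prodRev_congr _ fun _ hj => Function.update_of_ne (ne_of_mem_of_not_mem hj hi) M W

theorem prodRev_union_of_forall_lt (s t : Finset (Fin n)) (hts : ∀ a ∈ s, ∀ b ∈ t, b < a) :
    prodRev W (s ∪ t) = prodRev W s * prodRev W t := by
  induction t using Finset.induction_on_min with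
  | empty => simp
  | insert a t hat ih =>
    have ha : a ∉ t := fun h => lt_irrefl a (hat a h)
    have hmin : ∀ b ∈ s ∪ t, a ≤ b := by
      simp only [Finset.mem_union]
      rintro b (hb | hb)
      exacts [(hts b hb a (t.mem_insert_self a)).le, (hat b hb).le]
    have has : a ∉ s ∪ t := fun h =>
      lt_irrefl a <| (Finset.mem_union.1 h).elim (hts a · a (t.mem_insert_self a)) (hat a)
    rw [Finset.union_insert, prodRev_insert_of_forall_le W hmin has,
      ih fun a' ha' b hb => hts a' ha' b (Finset.mem_insert_of_mem hb),
      prodRev_insert_of_forall_le W (fun b hb => (hat b hb).le) ha, mul_assoc]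

theorem prodRev_Iic_eq_of_le {i k : Fin n} (hik : i ≤ k) :
    prodRev W (Finset.Iic k) = prodRev W (Finset.Ioc i k) * W i * prodRev W (Finset.Iio i) := by
  have hsplit : Finset.Iic k = Finset.Ioc i k ∪ ({i} ∪ Finset.Iio i) := by
    ext b
    simp only [Finset.mem_union, Finset.mem_Ioc, Finset.mem_Iic, Finset.mem_singleton,
      Finset.mem_Iio]
    omega
  rw [hsplit, prodRev_union_of_forall_lt, prodRev_union_of_forall_lt]
  · simp [prodRev, mul_assoc]
  · simp
  · simp only [Finset.mem_Ioc, Finset.mem_union, Finset.mem_singleton, Finset.mem_Iio]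
    omega

theorem prodRev_update_Iic_of_le {i k : Fin n} (hik : i ≤ k) (M : Matrix (Fin d) (Fin d) ℝ) :
    prodRev (Function.update W i M) (Finset.Iic k)
      = prodRev W (Finset.Ioc i k) * M * prodRev W (Finset.Iio i) := by
  rw [prodRev_Iic_eq_of_le _ hik, prodRev_update_of_notMem _ Finset.left_notMem_Ioc,
    prodRev_update_of_notMem _ Finset.notMem_Iio_self, Function.update_self]

theorem norm_prodRev_le (s : Finset (Fin n)) : ‖prodRev W s‖ ≤ ∏ j ∈ s, ‖W j‖ := by
  induction s using Finset.induction_on_min with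
  | empty =>
    rw [prodRev_empty, Finset.prod_empty, cstar_norm_def, map_one]
    exact ContinuousLinearMap.norm_id_le
  | insert a s has ih =>
    have ha : a ∉ s := fun h => lt_irrefl a (has a h)
    rw [prodRev_insert_of_forall_le W (fun b hb => (has b hb).le) ha, Finset.prod_insert ha,
      mul_comm]
    exact (norm_mul_le _ _).trans (by gcongr)

theorem differentiable_prodRev (s : Finset (Fin n)) :
    Differentiable ℝ fun V : Fin n → Matrix (Fin d) (Fin d) ℝ => prodRev V s := by
  intro V
  simp only [prodRev, ← List.map_reverse]
  exact (hasStrictFDerivAt_list_prod' (𝕜 := ℝ) (x := V)).differentiableAt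

end prodRev

section reprMatrix

variable {m k : Type*} [DecidableEq m] [DecidableEq k]

noncomputable def reprMatrix : (Matrix m k ℝ →L[ℝ] ℝ) →ₗ[ℝ] Matrix m k ℝ where
  toFun ℓ := of fun a b => ℓ (single a b 1)
  map_add' _ _ := rfl
  map_smul' _ _ := rfl

@[simp]
theorem reprMatrix_apply (ℓ : Matrix m k ℝ →L[ℝ] ℝ) (a : m) (b : k) :
    reprMatrix ℓ a b = ℓ (single a b 1) := rfl

variable [Fintype m] [Fintype k]

theorem apply_eq_sum_reprMatrix (ℓ : Matrix m k ℝ →L[ℝ] ℝ) (M : Matrix m k ℝ) :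
    ℓ M = ∑ a, ∑ b, M a b * reprMatrix ℓ a b := by
  conv_lhs => rw [matrix_eq_sum_single M]
  simp only [map_sum, reprMatrix_apply]
  refine Finset.sum_congr rfl fun a _ => Finset.sum_congr rfl fun b _ => ?_
  rw [← smul_eq_mul, ← map_smul, smul_single, smul_eq_mul, mul_one]

theorem reprMatrix_comp_mulLeftRight (ℓ : Matrix m m ℝ →L[ℝ] ℝ) (B A : Matrix m m ℝ) :
    reprMatrix (ℓ.comp (ContinuousLinearMap.mulLeftRight ℝ _ B A)) = Bᵀ * reprMatrix ℓ * Aᵀ := by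
  ext a b
  have hentry : ∀ c e, (B * single a b (1 : ℝ) * A : Matrix m m ℝ) c e = B c a * A b e := by
    intro c e
    simp [mul_apply, single_apply, ite_and]
  rw [reprMatrix_apply, ContinuousLinearMap.comp_apply, ContinuousLinearMap.mulLeftRight_apply,
    apply_eq_sum_reprMatrix]
  simp only [hentry, mul_apply, transpose_apply, Finset.sum_mul]
  rw [Finset.sum_comm]
  exact Finset.sum_congr rfl fun _ _ => Finset.sum_congr rfl fun _ _ => by ring

end reprMatrix

theorem fderiv_comp_single_eq_fderiv_update {𝕜 ι G : Type*} [NontriviallyNormedField 𝕜]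
    [Fintype ι] [DecidableEq ι] {E : ι → Type*} [∀ i, NormedAddCommGroup (E i)]
    [∀ i, NormedSpace 𝕜 (E i)] [NormedAddCommGroup G] [NormedSpace 𝕜 G] {g : (∀ i, E i) → G}
    {W : ∀ i, E i} (hg : DifferentiableAt 𝕜 g W) (i : ι) :
    (fderiv 𝕜 g W).comp (ContinuousLinearMap.single 𝕜 E i)
      = fderiv 𝕜 (fun M => g (Function.update W i M)) (W i) := by
  have hg' : HasFDerivAt g (fderiv 𝕜 g W) (Function.update W i (W i)) := by
    rw [Function.update_eq_self]
    exact hg.hasFDerivAt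
  have hcomp : HasFDerivAt (fun M => g (Function.update W i M))
      ((fderiv 𝕜 g W).comp (.pi (Pi.single i (.id 𝕜 (E i))))) (W i) :=
    hg'.comp (W i) (hasFDerivAt_update W (W i))
  rw [hcomp.fderiv]
  ext M : 1
  simp only [ContinuousLinearMap.comp_apply, ContinuousLinearMap.single_apply]
  congr 1
  funext j
  by_cases hj : j = i
  · subst hj; simp
  · simp [hj]

noncomputable def mulVecCLM {m k : Type*} [Fintype m] [Fintype k] (x : k → ℝ) :
    Matrix m k ℝ →L[ℝ] (m → ℝ) :=
  LinearMap.toContinuousLinearMap ((mulVecBilin ℝ ℝ).flip x)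

@[simp]
theorem mulVecCLM_apply {m k : Type*} [Fintype m] [Fintype k] (x : k → ℝ) (M : Matrix m k ℝ) :
    mulVecCLM x M = M *ᵥ x := rfl

section Cells

variable {n d : ℕ} {F : (Fin n → Fin d → ℝ) → ℝ} (x : Fin d → ℝ)

theorem fderiv_widest_comp_single {P : Fin n → Matrix (Fin d) (Fin d) ℝ}
    (hF : DifferentiableAt ℝ F fun k => P k *ᵥ x) (k : Fin n) :
    (fderiv ℝ (fun V => F fun k' => V k' *ᵥ x) P).comp (ContinuousLinearMap.single ℝ _ k)
      = (fderiv ℝ F fun k' => P k' *ᵥ x).comp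
          ((ContinuousLinearMap.single ℝ (fun _ => Fin d → ℝ) k).comp (mulVecCLM x)) := by
  let mulVecEach : (Fin n → Matrix (Fin d) (Fin d) ℝ) →L[ℝ] (Fin n → Fin d → ℝ) :=
    ContinuousLinearMap.pi fun k' => (mulVecCLM x).comp (ContinuousLinearMap.proj k')
  have hcomp : HasFDerivAt (fun V => F fun k' => V k' *ᵥ x)
      ((fderiv ℝ F fun k' => P k' *ᵥ x).comp mulVecEach) P :=
    hF.hasFDerivAt.comp P mulVecEach.hasFDerivAt
  rw [hcomp.fderiv]
  ext M : 1
  simp only [ContinuousLinearMap.comp_apply, ContinuousLinearMap.single_apply]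
  congr 1
  funext j
  by_cases hj : j = k
  · subst hj; simp [mulVecEach]
  · simp [mulVecEach, hj]

variable (W : Fin n → Matrix (Fin d) (Fin d) ℝ) (i : Fin n)

noncomputable def narrowNodesDeriv : Matrix (Fin d) (Fin d) ℝ →L[ℝ] (Fin n → Fin d → ℝ) :=
  ∑ k ∈ Finset.Ici i, (ContinuousLinearMap.single ℝ (fun _ => Fin d → ℝ) k).comp
    ((mulVecCLM x).comp
      (ContinuousLinearMap.mulLeftRight ℝ _ (prodRev W (Finset.Ioc i k)) (prodRev W (Finset.Iio i))))

theorem mulVec_prodRev_update_Iic (M : Matrix (Fin d) (Fin d) ℝ) :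
    (fun k => prodRev (Function.update W i M) (Finset.Iic k) *ᵥ x)
      = (fun k => prodRev W (Finset.Iic k) *ᵥ x) + narrowNodesDeriv x W i (M - W i) := by
  funext k
  simp only [narrowNodesDeriv, Pi.add_apply, _root_.sum_apply, Finset.sum_apply,
    ContinuousLinearMap.comp_apply, ContinuousLinearMap.single_apply, Pi.single_apply,
    Finset.sum_ite_eq, Finset.mem_Ici]
  split_ifs with hik
  · conv_rhs => rw [← Function.update_eq_self i W]
    rw [prodRev_update_Iic_of_le W hik, prodRev_update_Iic_of_le W hik]
    simp [mul_sub, sub_mul, sub_mulVec]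
  · rw [prodRev_update_of_notMem W (by simpa using hik), add_zero]

theorem matGrad_narrowest_eq_sum (hF : Differentiable ℝ F) :
    matGrad (fun V => F fun k => prodRev V (Finset.Iic k) *ᵥ x) W i
      = ∑ k ∈ Finset.Ici i, (prodRev W (Finset.Ioc i k))ᵀ
          * matGrad (fun V => F fun k' => V k' *ᵥ x) (fun k' => prodRev W (Finset.Iic k')) k
          * (prodRev W (Finset.Iio i))ᵀ := by
  set Y : Fin n → Fin d → ℝ := fun k => prodRev W (Finset.Iic k) *ᵥ x
  have hnarrow : Differentiable ℝ fun V => F fun k => prodRev V (Finset.Iic k) *ᵥ x :=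
    hF.comp (differentiable_pi.2 fun k =>
      (mulVecCLM x).differentiable.comp (differentiable_prodRev _))
  have hblock :
      HasFDerivAt (fun M => F fun k => prodRev (Function.update W i M) (Finset.Iic k) *ᵥ x)
        ((fderiv ℝ F Y).comp (narrowNodesDeriv x W i)) (W i) := by
    simp_rw [mulVec_prodRev_update_Iic]
    have hF' : HasFDerivAt F (fderiv ℝ F Y) (Y + narrowNodesDeriv x W i (W i - W i)) := by
      rw [sub_self, map_zero, add_zero]
      exact (hF Y).hasFDerivAt
    exact hF'.comp (W i) (((narrowNodesDeriv x W i).hasFDerivAt.comp (W i)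
      ((hasFDerivAt_id (W i)).sub_const (W i))).const_add Y)
  calc matGrad (fun V => F fun k => prodRev V (Finset.Iic k) *ᵥ x) W i
      = reprMatrix ((fderiv ℝ F Y).comp (narrowNodesDeriv x W i)) := by
        rw [← hblock.fderiv, ← fderiv_comp_single_eq_fderiv_update (hnarrow W)]
        rfl
    _ = _ := by
        simp only [narrowNodesDeriv, ContinuousLinearMap.comp_finsetSum, map_sum]
        refine Finset.sum_congr rfl fun k _ => ?_
        rw [← ContinuousLinearMap.comp_assoc, ← ContinuousLinearMap.comp_assoc,
          reprMatrix_comp_mulLeftRight, ContinuousLinearMap.comp_assoc,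
          ← fderiv_widest_comp_single x (hF Y)]
        rfl

end Cells

theorem blockwise_lipschitz_smoothness_general {n d : ℕ}
    (F : (Fin n → (Fin d → ℝ)) → ℝ) (hF : Differentiable ℝ F)
    (x : Fin d → ℝ) (W : Fin n → Matrix (Fin d) (Fin d) ℝ) (i : Fin n)
    (W1i W2i : Matrix (Fin d) (Fin d) ℝ)
    (L : Fin n → ℝ)
    (hLip : ∀ k ∈ Finset.Ici i,
      ‖matGrad (fun V => F fun k' => (V k').mulVec x)
          (fun k' => prodRev (Function.update W i W1i) (Finset.Iic k')) k
        - matGrad (fun V => F fun k' => (V k').mulVec x)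
          (fun k' => prodRev (Function.update W i W2i) (Finset.Iic k')) k‖
        ≤ L k * ‖Function.update W i W1i k - Function.update W i W2i k‖) :
    ‖matGrad (fun V => F fun k' => (prodRev V (Finset.Iic k')).mulVec x)
        (Function.update W i W1i) i
      - matGrad (fun V => F fun k' => (prodRev V (Finset.Iic k')).mulVec x)
        (Function.update W i W2i) i‖
      ≤ (∏ j ∈ Finset.Iio i, ‖W j‖) * L i * ‖W1i - W2i‖ := by
  rw [matGrad_narrowest_eq_sum x _ i hF, matGrad_narrowest_eq_sum x _ i hF,
    ← Finset.sum_sub_distrib]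
  simp only [prodRev_update_of_notMem, Finset.left_notMem_Ioc, Finset.notMem_Iio_self,
    not_false_eq_true, ← mul_sub, ← sub_mul]
  rw [Finset.sum_eq_single_of_mem i (Finset.mem_Ici.2 le_rfl)]
  · have hLip_i := hLip i (Finset.mem_Ici.2 le_rfl)
    rw [Function.update_self, Function.update_self] at hLip_i
    have hA : ‖(prodRev W (Finset.Iio i))ᵀ‖ ≤ ∏ j ∈ Finset.Iio i, ‖W j‖ := by
      rw [← conjTranspose_eq_transpose_of_trivial, l2_opNorm_conjTranspose]
      exact norm_prodRev_le W _
    rw [Finset.Ioc_self, prodRev_empty, transpose_one, one_mul]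
    calc _ ≤ _ := norm_mul_le _ _
      _ ≤ L i * ‖W1i - W2i‖ * ∏ j ∈ Finset.Iio i, ‖W j‖ :=
        mul_le_mul hLip_i hA (norm_nonneg _) ((norm_nonneg _).trans hLip_i)
      _ = _ := by ring
  · intro k hk hki
    have hzero := hLip k hk
    rw [Function.update_of_ne hki, Function.update_of_ne hki, sub_self, norm_zero, mul_zero,
      norm_le_zero_iff] at hzero
    rw [hzero, mul_zero, zero_mul]

theorem blockwise_lipschitz_smoothness {n d : ℕ} (hn : 1 ≤ n) (hd : 1 ≤ d)
    (F : (Fin n → (Fin d → ℝ)) → ℝ) (hF : Differentiable ℝ F)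
    (x : Fin d → ℝ) (W : Fin n → Matrix (Fin d) (Fin d) ℝ) (i : Fin n)
    (W1i W2i : Matrix (Fin d) (Fin d) ℝ)
    (L : Fin n → ℝ)
    (hLip : ∀ k ∈ Finset.Ici i,
      ‖matGrad (fun V => F fun k' => (V k').mulVec x)
          (fun k' => prodRev (Function.update W i W1i) (Finset.Iic k')) k
        - matGrad (fun V => F fun k' => (V k').mulVec x)
          (fun k' => prodRev (Function.update W i W2i) (Finset.Iic k')) k‖
        ≤ L k * ‖Function.update W i W1i k - Function.update W i W2i k‖) :
    ‖matGrad (fun V => F fun k' => (prodRev V (Finset.Iic k')).mulVec x)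
        (Function.update W i W1i) i
      - matGrad (fun V => F fun k' => (prodRev V (Finset.Iic k')).mulVec x)
        (Function.update W i W2i) i‖
      ≤ (∏ j ∈ Finset.Iio i, ‖W j‖) * L i * ‖W1i - W2i‖ :=
  blockwise_lipschitz_smoothness_general F hF x W i W1i W2i L hLip
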